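/- arXiv:math/0509080 — 6 statements merged into one kernel-verified Lean document; each statement's English description precedes it below -/
import Mathlib

section
/- Let k ≥ 2 and let g be a k-monotone probability density on (0,∞), i.e. g(x) = ∫₀^∞ (k/y^k)(y−x)₊^{k−1} dF(y) for a probability distribution F on (0,∞). Then for every x > 0, g(x) ≤ (1/x)(1 − 1/k)^{k−1}. -/
/-!
Writing `t = x / y`, the Beta(1,k) kernel of scale `y` satisfies
`x * (k / y^k) * (y - x)₊^(k-1) = k t (1 - t)^(k-1)`, and by AM-GM (Bernoulli's inequality) this
is at most its value `(1 - 1/k)^(k-1)` at `t = 1/k`. A mixture of the kernels over a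
probability distribution inherits the bound.
-/

open MeasureTheory

/-- The density at `x` of `y` times a Beta(1,k) variable. -/
noncomputable def betaKernel (k : ℕ) (y x : ℝ) : ℝ :=
  k / y ^ k * max (y - x) 0 ^ (k - 1)

lemma mul_mul_one_sub_pow_le (n : ℕ) {t : ℝ} (ht : t ≤ 1) :
    (n + 1) * t * (1 - t) ^ n ≤ (n / (n + 1)) ^ n := by
  rcases n.eq_zero_or_pos with rfl | hn
  · simpa using ht
  have hn' : (0 : ℝ) < n := by exact_mod_cast hn
  -- Bernoulli's inequality at `a = (n+1)(1-t)` with increment `n - a` is AM-GM for `n` copies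
  -- of `(n+1)(1-t)` and one copy of `(n+1)t`, whose mean is `n`.
  have amgm := pow_add_mul_le_add_pow (a := (n + 1) * (1 - t)) (b := n - (n + 1) * (1 - t))
    (by nlinarith) (by nlinarith) (n + 1)
  have hlhs : ((n + 1) * (1 - t)) ^ (n + 1) + ((n + 1 : ℕ) : ℝ) * ((n + 1) * (1 - t)) ^ (n + 1 - 1)
      * (n - (n + 1) * (1 - t)) = n * ((n + 1) * t * (1 - t) ^ n * (n + 1) ^ n) := by
    rw [Nat.add_sub_cancel, mul_pow, mul_pow]; push_cast; ring
  rw [hlhs, add_sub_cancel, pow_succ', mul_le_mul_iff_right₀ hn'] at amgm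
  rwa [div_pow, le_div_iff₀ (by positivity)]

lemma betaKernel_le {k : ℕ} (hk : 2 ≤ k) {x y : ℝ} (hx : 0 < x) (hy : 0 < y) :
    betaKernel k y x ≤ 1 / x * (1 - 1 / (k : ℝ)) ^ (k - 1) := by
  obtain ⟨n, rfl⟩ : ∃ n, k = n + 1 := ⟨k - 1, by omega⟩
  have hbound : (1 - 1 / ((n + 1 : ℕ) : ℝ)) ^ (n + 1 - 1) = ((n : ℝ) / (n + 1)) ^ n := by
    rw [Nat.add_sub_cancel]; push_cast; field_simp; ring
  rw [hbound, betaKernel, Nat.add_sub_cancel]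
  rcases le_or_gt y x with hyx | hxy
  · rw [max_eq_right (sub_nonpos.2 hyx), zero_pow (by omega), mul_zero]
    positivity
  · have hscale : ((n + 1 : ℕ) : ℝ) / y ^ (n + 1) * max (y - x) 0 ^ n
        = 1 / x * ((n + 1) * (x / y) * (1 - x / y) ^ n) := by
      rw [max_eq_left (sub_nonneg.2 hxy.le), one_sub_div hy.ne', div_pow]
      push_cast
      field_simp
      ring
    rw [hscale]
    gcongr
    exact mul_mul_one_sub_pow_le n (div_le_one_of_le₀ hxy.le hy.le)

theorem kMonotone_density_bound_general
    (k : ℕ) (hk : 2 ≤ k)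
    (F : Measure ℝ) [IsProbabilityMeasure F]
    (g : ℝ → ℝ)
    (hg : ∀ x : ℝ, 0 < x →
      g x = ∫ y in Set.Ioi (0:ℝ), (k / y ^ k) * (max (y - x) 0) ^ (k - 1) ∂F) :
    ∀ x : ℝ, 0 < x → g x ≤ (1 / x) * (1 - 1 / (k : ℝ)) ^ (k - 1) := by
  intro x hx
  set C := (1 / x) * (1 - 1 / (k : ℝ)) ^ (k - 1)
  have hC : 0 ≤ C := mul_nonneg (by positivity)
    (pow_nonneg (sub_nonneg.2 (div_le_one_of_le₀ (by norm_cast; omega) (by positivity))) _)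
  calc g x = ∫ y in Set.Ioi (0:ℝ), betaKernel k y x ∂F := hg x hx
    _ ≤ ∫ _ in Set.Ioi (0:ℝ), C ∂F := by
      refine integral_mono_of_nonneg ?_ (integrable_const C) ?_ <;>
        filter_upwards [ae_restrict_mem measurableSet_Ioi] with y (hy : 0 < y)
      · unfold betaKernel; positivity
      · exact betaKernel_le hk hx hy
    _ = F.real (Set.Ioi 0) * C := by rw [setIntegral_const, smul_eq_mul]
    _ ≤ C := mul_le_of_le_one_left hC measureReal_le_one

theorem kMonotone_density_bound
    (k : ℕ) (hk : 2 ≤ k)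
    (F : Measure ℝ) [IsProbabilityMeasure F] (hF : F (Set.Iic 0) = 0)
    (g : ℝ → ℝ)
    (hg : ∀ x : ℝ, 0 < x →
      g x = ∫ y in Set.Ioi (0:ℝ), (k / y ^ k) * (max (y - x) 0) ^ (k - 1) ∂F) :
    ∀ x : ℝ, 0 < x → g x ≤ (1 / x) * (1 - 1 / (k : ℝ)) ^ (k - 1) :=
  kMonotone_density_bound_general k hk F g hg
end

section
/- There exists v₀ > 1.59 such that for all integers k ≥ 2 and all real v with 0 ≤ v ≤ v₀, the inequality (1 − v/k)^{k−1} ≥ e^{−v} holds. -/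
open Real

lemma taylor6_le_exp {t : ℝ} (ht : 0 ≤ t) :
    1 + t + t^2/2 + t^3/6 + t^4/24 + t^5/120 + t^6/720 ≤ Real.exp t := by
  have h := Real.sum_le_exp_of_nonneg ht 7
  rw [Finset.sum_range_succ, Finset.sum_range_succ, Finset.sum_range_succ,
    Finset.sum_range_succ, Finset.sum_range_succ, Finset.sum_range_succ,
    Finset.sum_range_succ, Finset.sum_range_zero] at h
  norm_num [Nat.factorial] at h
  linarith

lemma key_poly {t : ℝ} (ht : 0 ≤ t) (ht' : t ≤ 1.5901) :
    1.5901 + t ≤ (1.5901 - 0.5901 * t) *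
      (1 + t + t^2/2 + t^3/6 + t^4/24 + t^5/120 + t^6/720) := by
  nlinarith [sq_nonneg t, sq_nonneg (t - 1), mul_nonneg ht (sub_nonneg.2 ht'),
    mul_nonneg (mul_nonneg ht ht) (sub_nonneg.2 ht'),
    mul_nonneg (mul_nonneg (mul_nonneg ht ht) ht) (sub_nonneg.2 ht'),
    pow_nonneg ht 4, pow_nonneg ht 5, pow_nonneg ht 6,
    mul_nonneg (pow_nonneg ht 4) (sub_nonneg.2 ht'),
    mul_nonneg (pow_nonneg ht 5) (sub_nonneg.2 ht')]

theorem exp_lower_bound_poly :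
    ∃ v₀ : ℝ, 1.59 < v₀ ∧
      ∀ (k : ℕ), 2 ≤ k → ∀ v : ℝ, 0 ≤ v → v ≤ v₀ →
        Real.exp (-v) ≤ (1 - v / (k : ℝ)) ^ (k - 1) := by
  refine ⟨1.5901, by norm_num, ?_⟩
  intro k hk v hv hv'
  have hkR : (2 : ℝ) ≤ (k : ℝ) := by exact_mod_cast hk
  have hkpos : (0 : ℝ) < (k : ℝ) := by linarith
  have hkm1 : ((k - 1 : ℕ) : ℝ) = (k : ℝ) - 1 := by
    have h1 : (1:ℕ) ≤ k := by omega
    push_cast [Nat.cast_sub h1]; ring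
  have hkm1pos : (0 : ℝ) < (k : ℝ) - 1 := by linarith
  obtain ⟨t, htdef⟩ : ∃ t : ℝ, t = v / ((k : ℝ) - 1) := ⟨_, rfl⟩
  have htnn : 0 ≤ t := htdef ▸ div_nonneg hv (le_of_lt hkm1pos)
  have hvt : v = t * ((k : ℝ) - 1) := by rw [htdef]; field_simp
  have hta : t ≤ 1.5901 := by
    rw [htdef, div_le_iff₀ hkm1pos]
    nlinarith
  have hexp : Real.exp (-v) = (Real.exp (-t)) ^ (k - 1) := by
    rw [← Real.exp_nat_mul, hkm1]
    congr 1
    rw [hvt]; ring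
  rw [hexp]
  have hden : (0:ℝ) < 1.5901 - 0.5901 * t := by nlinarith
  have hbase : Real.exp (-t) ≤ 1 - v / (k : ℝ) := by
    have hP := key_poly htnn hta
    have hT := taylor6_le_exp htnn
    have hfrac : (1.5901 - 0.5901 * t) / (1.5901 + t) ≤ 1 - v / (k : ℝ) := by
      rw [div_le_iff₀ (by linarith : (0:ℝ) < 1.5901 + t)]
      have key : v * (1.5901 + t) ≤ 1.5901 * t * (k : ℝ) := by
        have h2 : 0 ≤ t * (1.5901 - v) := mul_nonneg htnn (by linarith)
        nlinarith [hvt]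
      have h3 : v * (1.5901 + t) / (k : ℝ) ≤ 1.5901 * t := by
        rw [div_le_iff₀ hkpos]; linarith
      have h4 : v / (k:ℝ) * (1.5901 + t) = v * (1.5901 + t) / (k:ℝ) := by ring
      nlinarith [h3]
    have hexpt : (1.5901 + t) / (1.5901 - 0.5901 * t) ≤ Real.exp t := by
      rw [div_le_iff₀ hden]
      calc 1.5901 + t ≤ (1.5901 - 0.5901*t) * (1 + t + t^2/2 + t^3/6 + t^4/24 + t^5/120 + t^6/720) := hP
        _ ≤ (1.5901 - 0.5901*t) * Real.exp t := by
            exact mul_le_mul_of_nonneg_left hT (le_of_lt hden)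
        _ = Real.exp t * (1.5901 - 0.5901*t) := by ring
    have hpos : (0:ℝ) < (1.5901 + t) / (1.5901 - 0.5901 * t) :=
      div_pos (by linarith) hden
    calc Real.exp (-t) = (Real.exp t)⁻¹ := by rw [Real.exp_neg]
      _ ≤ ((1.5901 + t) / (1.5901 - 0.5901 * t))⁻¹ := inv_anti₀ hpos hexpt
      _ = (1.5901 - 0.5901 * t) / (1.5901 + t) := by rw [inv_div]
      _ ≤ 1 - v / (k : ℝ) := hfrac
  exact pow_le_pow_left₀ (Real.exp_nonneg _) hbase _
end

section
/- Let k ≥ 2 be an integer and define r_k(s,t) = ∫₀^{min(s,t)} (s−x)^{k−1}(t−x)^{k−1} dx for s,t > 0. Then for all s, t ≥ t₀ > 0, r_k(s,t) ≥ ((1 − e^{−v₀}) t₀ / (2k)) s^{k−1} t^{k−1}, where v₀ ≈ 1.59 is any constant such that (1−v/k)^{k−1} ≥ e^{−v} for 0 ≤ v ≤ v₀ and all k ≥ 2. -/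
/-!
On `[0, a]` with `a = v₀ t₀ / k`, the hypothesis on `v₀` applied at `v = k x / u` gives
`(u - x)^(k-1) ≥ u^(k-1) e^{-k x / t₀}` for `u ∈ {s, t}`, so the integrand dominates
`s^(k-1) t^(k-1) e^{-2 k x / t₀}`. Integrating this over `[0, a]` yields
`(1 - e^{-2 v₀}) t₀ / (2k) · s^(k-1) t^(k-1)`, and the rest of `[0, min s t]` contributes
a nonnegative amount. Taking `k = 2`, `v = v₀` in the hypothesis shows `v₀ < 2`, so `a < t₀`.
-/

open Real

lemma pow_mul_exp_neg_le_sub_pow {m : ℕ} {κ v₀ t₀ u x : ℝ} (hκ : 0 < κ)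
    (hv₀ : ∀ v : ℝ, 0 ≤ v → v ≤ v₀ → exp (-v) ≤ (1 - v / κ) ^ m)
    (ht₀ : 0 < t₀) (hu : t₀ ≤ u) (hx : 0 ≤ x) (hxv : κ * x ≤ v₀ * t₀) :
    u ^ m * exp (-(κ * x / t₀)) ≤ (u - x) ^ m := by
  have hu0 : 0 < u := ht₀.trans_le hu
  have hv : κ * x / u ≤ v₀ := by
    have hv₀0 : 0 ≤ v₀ :=
      nonneg_of_mul_nonneg_left ((by positivity : 0 ≤ κ * x).trans hxv) ht₀
    rw [div_le_iff₀ hu0]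
    nlinarith
  calc u ^ m * exp (-(κ * x / t₀)) ≤ u ^ m * exp (-(κ * x / u)) := by gcongr
    _ ≤ u ^ m * (1 - κ * x / u / κ) ^ m := by gcongr; exact hv₀ _ (by positivity) hv
    _ = (u - x) ^ m := by rw [← mul_pow]; congr 1; field_simp

lemma pow_mul_pow_mul_exp_neg_le {m : ℕ} {κ v₀ t₀ s t x : ℝ} (hκ : 0 < κ)
    (hv₀ : ∀ v : ℝ, 0 ≤ v → v ≤ v₀ → exp (-v) ≤ (1 - v / κ) ^ m)
    (ht₀ : 0 < t₀) (hs : t₀ ≤ s) (ht : t₀ ≤ t) (hx : 0 ≤ x) (hxv : κ * x ≤ v₀ * t₀) :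
    s ^ m * t ^ m * exp (-(2 * κ / t₀ * x)) ≤ (s - x) ^ m * (t - x) ^ m := by
  have hs0 : 0 < s := ht₀.trans_le hs
  have ht0 : 0 < t := ht₀.trans_le ht
  have hs' := pow_mul_exp_neg_le_sub_pow hκ hv₀ ht₀ hs hx hxv
  have ht' := pow_mul_exp_neg_le_sub_pow hκ hv₀ ht₀ ht hx hxv
  have hexp : exp (-(2 * κ / t₀ * x)) = exp (-(κ * x / t₀)) * exp (-(κ * x / t₀)) := by
    rw [← exp_add]; ring_nf
  calc s ^ m * t ^ m * exp (-(2 * κ / t₀ * x))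
      = (s ^ m * exp (-(κ * x / t₀))) * (t ^ m * exp (-(κ * x / t₀))) := by rw [hexp]; ring
    _ ≤ (s - x) ^ m * (t - x) ^ m :=
      mul_le_mul hs' ht' (by positivity) ((by positivity : (0:ℝ) ≤ _).trans hs')

lemma integral_exp_neg_mul {c : ℝ} (hc : c ≠ 0) (a : ℝ) :
    ∫ x in (0:ℝ)..a, exp (-(c * x)) = (1 - exp (-(c * a))) / c := by
  simp_rw [← neg_mul]
  rw [intervalIntegral.integral_comp_mul_left (fun y => exp y) (neg_ne_zero.2 hc), integral_exp]
  simp only [mul_zero, exp_zero, smul_eq_mul]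
  field_simp
  ring

lemma mul_pow_mul_pow_le_integral_sub_pow_mul_sub_pow {m : ℕ} {κ v₀ t₀ s t : ℝ}
    (hκ : 0 < κ) (hv₀ : ∀ v : ℝ, 0 ≤ v → v ≤ v₀ → exp (-v) ≤ (1 - v / κ) ^ m) (hv₀0 : 0 ≤ v₀)
    (ht₀ : 0 < t₀) (hs : t₀ ≤ s) (ht : t₀ ≤ t) :
    (1 - exp (-(2 * v₀))) * t₀ / (2 * κ) * s ^ m * t ^ m
      ≤ ∫ x in (0:ℝ)..v₀ * t₀ / κ, (s - x) ^ m * (t - x) ^ m := by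
  have hca : 2 * κ / t₀ * (v₀ * t₀ / κ) = 2 * v₀ := by field_simp
  calc (1 - exp (-(2 * v₀))) * t₀ / (2 * κ) * s ^ m * t ^ m
      = ∫ x in (0:ℝ)..v₀ * t₀ / κ, s ^ m * t ^ m * exp (-(2 * κ / t₀ * x)) := by
        rw [intervalIntegral.integral_const_mul, integral_exp_neg_mul (by positivity), hca]
        field_simp
    _ ≤ ∫ x in (0:ℝ)..v₀ * t₀ / κ, (s - x) ^ m * (t - x) ^ m := by
        refine intervalIntegral.integral_mono_on (by positivity)
          ((by fun_prop : Continuous _).intervalIntegrable _ _)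
          ((by fun_prop : Continuous _).intervalIntegrable _ _) ?_
        rintro x ⟨hx0, hxa⟩
        refine pow_mul_pow_mul_exp_neg_le hκ hv₀ ht₀ hs ht hx0 ?_
        rwa [le_div_iff₀ hκ, mul_comm] at hxa

lemma integral_sub_pow_mul_sub_pow_le_of_le_min {m : ℕ} {a s t : ℝ} (ha : 0 ≤ a)
    (has : a ≤ min s t) :
    ∫ x in (0:ℝ)..a, (s - x) ^ m * (t - x) ^ m
      ≤ ∫ x in (0:ℝ)..(min s t), (s - x) ^ m * (t - x) ^ m := by
  refine intervalIntegral.integral_mono_interval le_rfl ha has ?_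
    ((by fun_prop : Continuous _).intervalIntegrable _ _)
  refine MeasureTheory.ae_restrict_of_forall_mem measurableSet_Ioc fun x hx => ?_
  have hxs : x ≤ s := hx.2.trans (min_le_left s t)
  have hxt : x ≤ t := hx.2.trans (min_le_right s t)
  exact mul_nonneg (pow_nonneg (by linarith) _) (pow_nonneg (by linarith) _)

theorem r_k_lower_bound
    (k : ℕ) (hk : 2 ≤ k)
    (v₀ : ℝ) (hv₀pos : 0 < v₀)
    (hv₀ : ∀ (k' : ℕ), 2 ≤ k' → ∀ v : ℝ, 0 ≤ v → v ≤ v₀ →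
      Real.exp (-v) ≤ (1 - v / (k' : ℝ)) ^ (k' - 1))
    (t₀ : ℝ) (ht₀ : 0 < t₀) (s t : ℝ) (hs : t₀ ≤ s) (ht : t₀ ≤ t) :
    ((1 - Real.exp (-v₀)) * t₀ / (2 * k)) * s ^ (k - 1) * t ^ (k - 1)
      ≤ ∫ x in (0:ℝ)..(min s t), (s - x) ^ (k - 1) * (t - x) ^ (k - 1) := by
  have hv₀_lt_two : v₀ < 2 := by
    have h := hv₀ 2 le_rfl v₀ hv₀pos.le le_rfl
    norm_num at h
    linarith [exp_pos (-v₀)]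
  have hk0 : (0:ℝ) < k := by positivity
  have hk2 : (2:ℝ) ≤ k := by exact_mod_cast hk
  have ha_le : v₀ * t₀ / k ≤ min s t := by
    refine le_trans ?_ (le_min hs ht)
    rw [div_le_iff₀ hk0]
    nlinarith
  have hs0 : 0 < s := ht₀.trans_le hs
  have ht0 : 0 < t := ht₀.trans_le ht
  have h2v₀ : exp (-(2 * v₀)) ≤ exp (-v₀) := exp_le_exp.2 (by linarith)
  calc ((1 - exp (-v₀)) * t₀ / (2 * k)) * s ^ (k - 1) * t ^ (k - 1)
      ≤ ((1 - exp (-(2 * v₀))) * t₀ / (2 * k)) * s ^ (k - 1) * t ^ (k - 1) := by gcongr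
    _ ≤ ∫ x in (0:ℝ)..v₀ * t₀ / k, (s - x) ^ (k - 1) * (t - x) ^ (k - 1) :=
        mul_pow_mul_pow_le_integral_sub_pow_mul_sub_pow hk0 (hv₀ k hk) hv₀pos.le ht₀ hs ht
    _ ≤ ∫ x in (0:ℝ)..(min s t), (s - x) ^ (k - 1) * (t - x) ^ (k - 1) :=
        integral_sub_pow_mul_sub_pow_le_of_le_min (by positivity) ha_le
end

section
/- Let k ≥ 2 and let g(x) = ∫₀^∞ (k/t^k)(t−x)₊^{k−1} dF(t) for a probability distribution F on (0,∞). Then for each j = 1, …, k, t^j g^{(j−1)}(t) → 0 as t → ∞. -/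
/-!
Write `Hₘ(x) = ∫_{t > 0} k t⁻ᵏ (t - x)₊ᵐ dF(t)`, so that `g = H_{k-1}` on `(0, ∞)`.
Differentiating under the integral sign gives `Hₘ' = -m H_{m-1}` for `m ≥ 2`, so for `j < k` the
derivative `g^{(j-1)}` is a multiple of `H_{k-j}`. The kernel vanishes for `t ≤ x` and is at most
`k x^{m-k}` for `t ≥ x`, hence `x^j |H_{k-j}(x)| ≤ k F(x, ∞) → 0`. For `j = k`, `g^{(k-2)}` is a
multiple of `H₁`, which is Lipschitz on `(x/2, ∞)` with constant `k (x/2)⁻ᵏ F(x/2, ∞)`; this bounds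
`g^{(k-1)}(x)` whether or not `H₁` is differentiable at `x` (where it is not, `deriv` is `0`).
-/

open MeasureTheory Filter Set Topology

namespace KMonotone

lemma hasDerivAt_max_zero_pow {m : ℕ} (hm : 2 ≤ m) (z : ℝ) :
    HasDerivAt (fun y : ℝ => max y 0 ^ m) (m * max z 0 ^ (m - 1)) z := by
  rcases lt_trichotomy z 0 with hz | rfl | hz
  · rw [max_eq_right hz.le, zero_pow (by omega), mul_zero]
    refine (hasDerivAt_const z 0).congr_of_eventuallyEq ?_
    filter_upwards [Iio_mem_nhds hz] with y hy
    rw [max_eq_right hy.le, zero_pow (by omega)]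
  · rw [max_self, zero_pow (by omega), mul_zero, ← hasDerivWithinAt_univ, ← Iic_union_Ici]
    refine .union
      ((hasDerivWithinAt_const 0 _ 0).congr_of_mem (fun y hy => ?_) (mem_Iic.2 le_rfl))
      (((hasDerivAt_pow m 0).hasDerivWithinAt.congr_of_mem (fun y hy => ?_)
        (mem_Ici.2 le_rfl)).congr_deriv ?_)
    · rw [max_eq_right hy, zero_pow (by omega)]
    · rw [max_eq_left hy]
    · simp [zero_pow (show m - 1 ≠ 0 by omega)]
  · rw [max_eq_left hz.le]
    refine (hasDerivAt_pow m z).congr_of_eventuallyEq ?_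
    filter_upwards [Ioi_mem_nhds hz] with y hy
    rw [max_eq_left hy.le]

lemma norm_setIntegral_Ioi_le {E : Type*} [NormedAddCommGroup E] [NormedSpace ℝ E]
    {μ : Measure ℝ} [IsFiniteMeasure μ] {f : ℝ → E} {a b C : ℝ} (hab : a ≤ b)
    (hf : EqOn f 0 (Ioc a b)) (hC : ∀ t ∈ Ioi b, ‖f t‖ ≤ C) :
    ‖∫ t in Ioi a, f t ∂μ‖ ≤ C * μ.real (Ioi b) := by
  rw [setIntegral_eq_of_subset_of_forall_sdiff_eq_zero measurableSet_Ioi (Ioi_subset_Ioi hab)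
    fun t ht => hf ⟨ht.1, not_lt.1 ht.2⟩]
  exact norm_setIntegral_le_of_norm_le_const (measure_lt_top _ _) hC

lemma tendsto_measureReal_Ioi_atTop (μ : Measure ℝ) [IsFiniteMeasure μ] :
    Tendsto (fun a => μ.real (Ioi a)) atTop (𝓝 0) := by
  have h := tendsto_measure_iInter_atTop (μ := μ) (fun a => measurableSet_Ioi.nullMeasurableSet)
    (fun _ _ hab => Ioi_subset_Ioi hab) ⟨0, measure_ne_top μ _⟩
  have hempty : ⋂ a : ℝ, Ioi a = ∅ := iInter_eq_empty_iff.2 fun a => ⟨a, lt_irrefl a⟩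
  rw [hempty, measure_empty] at h
  exact (ENNReal.tendsto_toReal ENNReal.zero_ne_top).comp h

section Kernel

variable {k m : ℕ} {a x y t : ℝ}

noncomputable def truncPowKernel (k m : ℕ) (x t : ℝ) : ℝ :=
  (k / t ^ k) * max (t - x) 0 ^ m

@[fun_prop]
lemma measurable_truncPowKernel : Measurable (truncPowKernel k m x) := by
  unfold truncPowKernel
  fun_prop

lemma truncPowKernel_nonneg (ht : 0 < t) : 0 ≤ truncPowKernel k m x t := by
  unfold truncPowKernel
  positivity

lemma truncPowKernel_eq_zero (hm : m ≠ 0) (ht : t ≤ x) : truncPowKernel k m x t = 0 := by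
  rw [truncPowKernel, max_eq_right (sub_nonpos.2 ht), zero_pow hm, mul_zero]

lemma truncPowKernel_antitone (ht : 0 < t) : Antitone fun x => truncPowKernel k m x t := by
  intro x y hxy
  simp only [truncPowKernel]
  gcongr

lemma truncPowKernel_le (hmk : m ≤ k) (hx : 0 < x) (hxt : x ≤ t) :
    truncPowKernel k m x t ≤ k / x ^ (k - m) := by
  have ht : 0 < t := hx.trans_le hxt
  calc truncPowKernel k m x t ≤ k / t ^ k * t ^ m := by
        rw [truncPowKernel, max_eq_left (sub_nonneg.2 hxt)]
        gcongr
        linarith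
    _ = k / t ^ (k - m) := by
        rw [← pow_sub_mul_pow t hmk]
        field_simp
    _ ≤ k / x ^ (k - m) := by gcongr

lemma truncPowKernel_le_of_ne_zero (hm : m ≠ 0) (hmk : m ≤ k) (hx : 0 < x) :
    truncPowKernel k m x t ≤ k / x ^ (k - m) := by
  rcases le_total t x with htx | hxt
  · rw [truncPowKernel_eq_zero hm htx]
    positivity
  · exact truncPowKernel_le hmk hx hxt

lemma abs_truncPowKernel_one_sub_le (ha : 0 < a) (hat : a ≤ t) :
    |truncPowKernel k 1 x t - truncPowKernel k 1 y t| ≤ k / a ^ k * |x - y| := by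
  have ht : 0 < t := ha.trans_le hat
  rw [truncPowKernel, truncPowKernel, pow_one, pow_one, ← mul_sub, abs_mul,
    abs_of_nonneg (by positivity)]
  have := abs_max_sub_max_le_abs (t - x) (t - y) 0
  rw [sub_sub_sub_cancel_left, abs_sub_comm y x] at this
  exact mul_le_mul (by gcongr) this (abs_nonneg _) (by positivity)

lemma hasDerivAt_truncPowKernel (hm : 2 ≤ m) (x t : ℝ) :
    HasDerivAt (fun y => truncPowKernel k m y t) (-m * truncPowKernel k (m - 1) x t) x := by
  have h := ((hasDerivAt_max_zero_pow hm (t - x)).comp x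
    ((hasDerivAt_id x).const_sub t)).const_mul ((k : ℝ) / t ^ k)
  exact h.congr_deriv (by rw [truncPowKernel]; ring)

end Kernel

section Integral

variable (F : Measure ℝ) [IsFiniteMeasure F] {k m : ℕ} {a x y : ℝ}

noncomputable def truncPowIntegral (k m : ℕ) (x : ℝ) : ℝ :=
  ∫ t in Ioi 0, truncPowKernel k m x t ∂F

lemma integrableOn_truncPowKernel (hm : m ≠ 0) (hmk : m ≤ k) (hx : 0 < x) :
    IntegrableOn (truncPowKernel k m x) (Ioi 0) F := by
  refine Measure.integrableOn_of_bounded (M := k / x ^ (k - m)) (measure_ne_top _ _)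
    measurable_truncPowKernel.aestronglyMeasurable ?_
  refine (ae_restrict_iff' measurableSet_Ioi).2 (Eventually.of_forall fun t (ht : 0 < t) => ?_)
  rw [Real.norm_of_nonneg (truncPowKernel_nonneg ht)]
  exact truncPowKernel_le_of_ne_zero hm hmk hx

lemma norm_truncPowIntegral_le (hm : m ≠ 0) (hmk : m ≤ k) (hx : 0 < x) :
    ‖truncPowIntegral F k m x‖ ≤ k / x ^ (k - m) * F.real (Ioi x) := by
  refine norm_setIntegral_Ioi_le hx.le (fun t ht => truncPowKernel_eq_zero hm ht.2)
    fun t (ht : x < t) => ?_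
  rw [Real.norm_of_nonneg (truncPowKernel_nonneg (hx.trans ht))]
  exact truncPowKernel_le hmk hx ht.le

lemma norm_truncPowIntegral_one_sub_le (hk : 1 ≤ k) (ha : 0 < a) (hx : a ≤ x) (hy : a ≤ y) :
    ‖truncPowIntegral F k 1 x - truncPowIntegral F k 1 y‖ ≤
      k / a ^ k * F.real (Ioi a) * ‖x - y‖ := by
  rw [truncPowIntegral, truncPowIntegral, ← integral_sub
    (integrableOn_truncPowKernel F one_ne_zero hk (ha.trans_le hx))
    (integrableOn_truncPowKernel F one_ne_zero hk (ha.trans_le hy)), mul_right_comm]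
  refine norm_setIntegral_Ioi_le ha.le (fun t ht => ?_) fun t (ht : a < t) => ?_
  · simp [truncPowKernel_eq_zero one_ne_zero (ht.2.trans hx),
      truncPowKernel_eq_zero one_ne_zero (ht.2.trans hy)]
  · exact abs_truncPowKernel_one_sub_le ha ht.le

lemma norm_deriv_truncPowIntegral_one_le (hk : 1 ≤ k) (hx : 0 < x) :
    ‖deriv (truncPowIntegral F k 1) x‖ ≤ k / (x / 2) ^ k * F.real (Ioi (x / 2)) := by
  refine norm_deriv_le_of_lip' (by positivity) ?_
  filter_upwards [Ioi_mem_nhds (half_lt_self hx)] with y (hy : x / 2 < y)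
  exact norm_truncPowIntegral_one_sub_le F hk (half_pos hx) hy.le (half_le_self hx.le)

lemma hasDerivAt_truncPowIntegral (hm : 2 ≤ m) (hmk : m ≤ k) (hx : 0 < x) :
    HasDerivAt (truncPowIntegral F k m) (-m * truncPowIntegral F k (m - 1) x) x := by
  have key := hasDerivAt_integral_of_dominated_loc_of_deriv_le (μ := F.restrict (Ioi 0))
    (F := fun y t => truncPowKernel k m y t) (x₀ := x) (Ioi_mem_nhds (half_lt_self hx))
    (Eventually.of_forall fun y => measurable_truncPowKernel.aestronglyMeasurable)
    (integrableOn_truncPowKernel F (by omega) hmk hx)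
    (F' := fun y t => -m * truncPowKernel k (m - 1) y t)
    (measurable_truncPowKernel.const_mul _).aestronglyMeasurable
    (bound := fun t => m * truncPowKernel k (m - 1) (x / 2) t) ?_
    ((integrableOn_truncPowKernel F (by omega) (by omega) (half_pos hx)).const_mul _)
    (Eventually.of_forall fun t y _ => hasDerivAt_truncPowKernel hm y t)
  · rw [truncPowIntegral, ← integral_const_mul]
    exact key.2
  · refine (ae_restrict_iff' measurableSet_Ioi).2
      (Eventually.of_forall fun t (ht : 0 < t) y (hy : x / 2 < y) => ?_)
    rw [norm_mul, norm_neg, Real.norm_natCast, Real.norm_of_nonneg (truncPowKernel_nonneg ht)]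
    gcongr
    exact truncPowKernel_antitone ht hy.le

lemma iteratedDeriv_truncPowIntegral (hmk : m ≤ k) {i : ℕ} (hi : i < m) :
    EqOn (iteratedDeriv i (truncPowIntegral F k m))
      (fun x => (-1) ^ i * m.descFactorial i * truncPowIntegral F k (m - i) x) (Ioi 0) := by
  induction i with
  | zero => intro x _; simp
  | succ i ih =>
    intro x (hx : 0 < x)
    have hderiv := hasDerivAt_truncPowIntegral F (k := k) (m := m - i) (by omega) (by omega) hx
    rw [iteratedDeriv_succ, ((ih (by omega)).eventuallyEq_of_mem (Ioi_mem_nhds hx)).deriv_eq,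
      deriv_const_mul _ hderiv.differentiableAt, hderiv.deriv, Nat.descFactorial_succ,
      Nat.cast_mul, Nat.cast_sub (by omega), show m - i - 1 = m - (i + 1) by omega]
    ring

end Integral

section Decay

variable (F : Measure ℝ) [IsFiniteMeasure F] {k j : ℕ}

lemma tendsto_pow_mul_iteratedDeriv_truncPowIntegral_of_lt (hj : 1 ≤ j) (hjk : j < k) :
    Tendsto (fun t => t ^ j * iteratedDeriv (j - 1) (truncPowIntegral F k (k - 1)) t)
      atTop (𝓝 0) := by
  set c : ℝ := ↑((k - 1).descFactorial (j - 1))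
  have hbound : ∀ t > 0, ‖t ^ j * iteratedDeriv (j - 1) (truncPowIntegral F k (k - 1)) t‖ ≤
      c * k * F.real (Ioi t) := by
    intro t ht
    have hH := norm_truncPowIntegral_le F (k := k) (m := k - j) (by omega) (by omega) ht
    rw [show k - (k - j) = j by omega] at hH
    rw [iteratedDeriv_truncPowIntegral F (by omega) (by omega) ht,
      show k - 1 - (j - 1) = k - j by omega]
    calc _ = t ^ j * c * ‖truncPowIntegral F k (k - j) t‖ := by
          simp [c, abs_of_pos ht, mul_assoc]
      _ ≤ t ^ j * c * (k / t ^ j * F.real (Ioi t)) := by gcongr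
      _ = c * k * F.real (Ioi t) := by field_simp
  refine squeeze_zero_norm' ((eventually_gt_atTop 0).mono hbound) ?_
  simpa using (tendsto_measureReal_Ioi_atTop F).const_mul (c * k)

lemma tendsto_pow_mul_iteratedDeriv_truncPowIntegral_self (hk : 2 ≤ k) :
    Tendsto (fun t => t ^ k * iteratedDeriv (k - 1) (truncPowIntegral F k (k - 1)) t)
      atTop (𝓝 0) := by
  set c : ℝ := (-1) ^ (k - 2) * (k - 1).descFactorial (k - 2)
  have hsucc : iteratedDeriv (k - 1) (truncPowIntegral F k (k - 1)) =
      deriv (iteratedDeriv (k - 2) (truncPowIntegral F k (k - 1))) := by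
    rw [← iteratedDeriv_succ]
    congr 1
    omega
  have hbound : ∀ t > 0, ‖t ^ k * iteratedDeriv (k - 1) (truncPowIntegral F k (k - 1)) t‖ ≤
      ‖c‖ * k * 2 ^ k * F.real (Ioi (t / 2)) := by
    intro t ht
    have hev : iteratedDeriv (k - 2) (truncPowIntegral F k (k - 1)) =ᶠ[𝓝 t]
        fun x => c * truncPowIntegral F k 1 x := by
      filter_upwards [Ioi_mem_nhds ht] with x hx
      rw [iteratedDeriv_truncPowIntegral F (by omega) (by omega) hx,
        show k - 1 - (k - 2) = 1 by omega]
    rw [hsucc, hev.deriv_eq, deriv_const_mul_field', norm_mul, norm_mul, norm_pow,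
      Real.norm_of_nonneg ht.le]
    calc _ ≤ t ^ k * (‖c‖ * (k / (t / 2) ^ k * F.real (Ioi (t / 2)))) := by
          gcongr
          exact norm_deriv_truncPowIntegral_one_le F (by omega) ht
      _ = ‖c‖ * k * 2 ^ k * F.real (Ioi (t / 2)) := by
          rw [div_pow]
          field_simp
  refine squeeze_zero_norm' ((eventually_gt_atTop 0).mono hbound) ?_
  simpa using ((tendsto_measureReal_Ioi_atTop F).comp
    (tendsto_id.atTop_div_const two_pos)).const_mul (‖c‖ * k * 2 ^ k)

lemma tendsto_pow_mul_iteratedDeriv_truncPowIntegral (hk : 2 ≤ k) (hj : 1 ≤ j) (hjk : j ≤ k) :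
    Tendsto (fun t => t ^ j * iteratedDeriv (j - 1) (truncPowIntegral F k (k - 1)) t)
      atTop (𝓝 0) := by
  rcases hjk.lt_or_eq with hjk | rfl
  · exact tendsto_pow_mul_iteratedDeriv_truncPowIntegral_of_lt F hj hjk
  · exact tendsto_pow_mul_iteratedDeriv_truncPowIntegral_self F hk

end Decay

end KMonotone

theorem kMonotone_derivative_decay_general
    (k : ℕ) (hk : 2 ≤ k)
    (F : Measure ℝ) [IsProbabilityMeasure F]
    (g : ℝ → ℝ)
    (hg : ∀ x : ℝ, 0 < x →
      g x = ∫ t in Set.Ioi (0:ℝ), (k / t ^ k) * (max (t - x) 0) ^ (k - 1) ∂F) :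
    ∀ j : ℕ, 1 ≤ j → j ≤ k →
      Tendsto (fun t : ℝ => t ^ j * iteratedDeriv (j - 1) g t) atTop (nhds 0) := by
  intro j hj hjk
  have hgH : EqOn g (KMonotone.truncPowIntegral F k (k - 1)) (Ioi 0) := hg
  refine (KMonotone.tendsto_pow_mul_iteratedDeriv_truncPowIntegral F hk hj hjk).congr' ?_
  filter_upwards [eventually_gt_atTop 0] with t ht
  rw [hgH.iteratedDeriv_of_isOpen isOpen_Ioi (j - 1) ht]

theorem kMonotone_derivative_decay
    (k : ℕ) (hk : 2 ≤ k)
    (F : Measure ℝ) [IsProbabilityMeasure F] (hF0 : F (Set.Iic 0) = 0)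
    (g : ℝ → ℝ)
    (hg : ∀ x : ℝ, 0 < x →
      g x = ∫ t in Set.Ioi (0:ℝ), (k / t ^ k) * (max (t - x) 0) ^ (k - 1) ∂F) :
    ∀ j : ℕ, 1 ≤ j → j ≤ k →
      Tendsto (fun t : ℝ => t ^ j * iteratedDeriv (j - 1) g t) atTop (nhds 0) :=
  kMonotone_derivative_decay_general k hk F g hg
end

section
/- For the function r(x) = (1−x²)^{k+1}(1+x) and C_{k,k} = r^{(k)}(0), one has: if k is even, C_{k,k} = 2·(−1)^{k/2}(k+1)(k−1)!·binomial(k, k/2 − 1); if k is odd, C_{k,k} = (−1)^{(k−1)/2}·k!·binomial(k+1, (k−1)/2). -/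
/-!
A polynomial's `k`-th derivative at `0` is `k!` times its `k`-th coefficient, so
`C_{k,k} = k! ([x^k] q + [x^{k-1}] q)` with `q = (1 - x²)^{k+1}`. Only even powers occur in `q`,
with `[x^{2j}] q = (-1)^j binom(k+1, j)`, so exactly one of the two coefficients survives. For odd
`k` this is already the formula; for even `k = 2t + 2` it remains to rewrite
`(2t+2)! binom(2t+3, t+1)` as `2 (2t+3) (2t+1)! binom(2t+2, t)`, which is Pascal's
`(t+1) binom(2t+3, t+1) = (2t+3) binom(2t+2, t)`.
-/

open Polynomial Nat

namespace Polynomial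

section Deriv

variable {𝕜 : Type*} [NontriviallyNormedField 𝕜]

theorem iteratedDeriv_eval (p : 𝕜[X]) (n : ℕ) :
    iteratedDeriv n (fun x => p.eval x) = fun x => (derivative^[n] p).eval x := by
  induction n generalizing p with
  | zero => rfl
  | succ n ih =>
    rw [iteratedDeriv_succ', Function.iterate_succ_apply, ← ih]
    congr with x
    exact p.deriv

theorem iteratedDeriv_eval_zero (p : 𝕜[X]) (n : ℕ) :
    iteratedDeriv n (fun x => p.eval x) 0 = n ! * p.coeff n := by
  rw [iteratedDeriv_eval]
  beta_reduce
  rw [← coeff_zero_eq_eval_zero, coeff_iterate_derivative, zero_add,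
    descFactorial_self, nsmul_eq_mul]

end Deriv

theorem coeff_mul_one_add_X_succ {R : Type*} [Semiring R] (p : R[X]) (n : ℕ) :
    (p * (1 + X)).coeff (n + 1) = p.coeff (n + 1) + p.coeff n := by
  rw [mul_add, mul_one, coeff_add, coeff_mul_X]

section Coeff

variable {R : Type*} [CommRing R]

theorem coeff_one_sub_X_pow (n j : ℕ) :
    ((1 - X : R[X]) ^ n).coeff j = (-1) ^ j * n.choose j := by
  rw [show (1 - X : R[X]) = C (-1) * (X + C (-1)) by simp [sub_eq_add_neg], mul_pow, ← C_pow,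
    coeff_C_mul, coeff_X_add_C_pow]
  rcases le_or_gt j n with hj | hj
  · rw [← mul_assoc, ← pow_add, show n + (n - j) = 2 * (n - j) + j by omega, pow_add, pow_mul,
      neg_one_sq, one_pow, one_mul]
  · simp [choose_eq_zero_of_lt hj]

theorem one_sub_X_sq_pow_eq_expand (n : ℕ) :
    (1 - X ^ 2 : R[X]) ^ n = expand R 2 ((1 - X) ^ n) := by
  simp

theorem coeff_one_sub_X_sq_pow_two_mul (n j : ℕ) :
    ((1 - X ^ 2 : R[X]) ^ n).coeff (2 * j) = (-1) ^ j * n.choose j := by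
  rw [one_sub_X_sq_pow_eq_expand, coeff_expand_mul' two_pos, coeff_one_sub_X_pow]

theorem coeff_one_sub_X_sq_pow_two_mul_add_one (n j : ℕ) :
    ((1 - X ^ 2 : R[X]) ^ n).coeff (2 * j + 1) = 0 := by
  rw [one_sub_X_sq_pow_eq_expand, coeff_expand two_pos, if_neg (by omega)]

end Coeff

end Polynomial

theorem Nat.factorial_mul_choose_two_mul_add_three (t : ℕ) :
    (2 * t + 2)! * (2 * t + 3).choose (t + 1)
      = 2 * (2 * t + 3) * (2 * t + 1)! * (2 * t + 2).choose t := by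
  have h := add_one_mul_choose_eq (2 * t + 2) t
  rw [factorial_succ]
  calc (2 * t + 1 + 1) * (2 * t + 1)! * (2 * t + 3).choose (t + 1)
      = 2 * (2 * t + 1)! * ((2 * t + 3).choose (t + 1) * (t + 1)) := by ring
    _ = 2 * (2 * t + 3) * (2 * t + 1)! * (2 * t + 2).choose t := by rw [← h]; ring

theorem Ckk_formula (k : ℕ) (hk : 2 ≤ k) :
    (Even k →
      iteratedDeriv k (fun x : ℝ => (1 - x ^ 2) ^ (k + 1) * (1 + x)) 0
        = 2 * (-1 : ℝ) ^ (k / 2) * (k + 1) * (k - 1).factorial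
            * (k.choose (k / 2 - 1))) ∧
    (Odd k →
      iteratedDeriv k (fun x : ℝ => (1 - x ^ 2) ^ (k + 1) * (1 + x)) 0
        = (-1 : ℝ) ^ ((k - 1) / 2) * k.factorial
            * ((k + 1).choose ((k - 1) / 2))) := by
  have hderiv : ∀ n, k = n + 1 →
      iteratedDeriv k (fun x : ℝ => (1 - x ^ 2) ^ (k + 1) * (1 + x)) 0
        = k ! * (((1 - X ^ 2 : ℝ[X]) ^ (k + 1)).coeff k
          + ((1 - X ^ 2 : ℝ[X]) ^ (k + 1)).coeff n) := by
    rintro n rfl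
    rw [← coeff_mul_one_add_X_succ, ← iteratedDeriv_eval_zero]
    simp
  constructor
  · rintro ⟨m, hm⟩
    obtain ⟨t, rfl⟩ : ∃ t, k = 2 * (t + 1) := ⟨m - 1, by omega⟩
    rw [hderiv (2 * t + 1) (by ring), coeff_one_sub_X_sq_pow_two_mul,
      coeff_one_sub_X_sq_pow_two_mul_add_one, add_zero,
      show 2 * (t + 1) - 1 = 2 * t + 1 by omega, Nat.mul_div_cancel_left _ two_pos,
      add_tsub_cancel_right]
    have h := congrArg (fun n : ℕ => (n : ℝ)) (factorial_mul_choose_two_mul_add_three t)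
    push_cast at h ⊢
    linear_combination (-1 : ℝ) ^ (t + 1) * h
  · rintro ⟨t, rfl⟩
    rw [hderiv (2 * t) rfl, coeff_one_sub_X_sq_pow_two_mul_add_one, coeff_one_sub_X_sq_pow_two_mul,
      add_tsub_cancel_right, Nat.mul_div_cancel_left _ two_pos]
    ring
end

section
/- For the function r(x) = (1−x²)^{k+1}(1+x) and every j ∈ {0, 1, …, k}, the j-th derivative r^{(j)}(0) is nonzero. -/
open Polynomial

lemma iterDeriv_poly (n : ℕ) (p : ℝ[X]) :
    iteratedDeriv n (fun x => p.eval x) = fun x => (derivative^[n] p).eval x := by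
  induction n generalizing p with
  | zero => simp
  | succ n ih =>
    rw [iteratedDeriv_succ']
    have : deriv (fun x => p.eval x) = fun x => (derivative p).eval x := by
      funext x; exact Polynomial.deriv p
    rw [this, ih, Function.iterate_succ_apply]

lemma coeff_q (n m : ℕ) :
    ((1 - X ^ 2 : ℝ[X]) ^ n).coeff m =
      if 2 ∣ m then (-1 : ℝ) ^ (m / 2) * n.choose (m / 2) else 0 := by
  have h : (1 - X ^ 2 : ℝ[X]) ^ n =
      ∑ i ∈ Finset.range (n + 1), C ((-1 : ℝ) ^ i * n.choose i) * X ^ (2 * i) := by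
    rw [sub_eq_add_neg, add_comm, add_pow]
    refine Finset.sum_congr rfl fun i _ => ?_
    rw [neg_pow, one_pow, ← pow_mul]
    simp [C_mul, mul_comm, mul_assoc, mul_left_comm]
  rw [h, finset_sum_coeff]
  simp only [coeff_C_mul, coeff_X_pow]
  by_cases hm : 2 ∣ m
  · obtain ⟨t, rfl⟩ := hm
    have hdiv : 2 * t / 2 = t := by omega
    rw [if_pos ⟨t, rfl⟩, hdiv]
    by_cases ht : t ≤ n
    · rw [Finset.sum_eq_single t]
      · simp
      · intro b _ hb
        simp only [mul_ite, mul_one, mul_zero]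
        rw [if_neg (by omega : ¬ 2 * t = 2 * b)]
      · intro h'; simp at h'; omega
    · rw [Nat.choose_eq_zero_of_lt (by omega), Finset.sum_eq_zero]
      · simp
      · intro b hb
        simp only [Finset.mem_range] at hb
        simp only [mul_ite, mul_one, mul_zero]
        rw [if_neg (by omega : ¬ 2 * t = 2 * b)]
  · rw [if_neg hm]
    refine Finset.sum_eq_zero fun b _ => ?_
    simp only [mul_ite, mul_one, mul_zero]
    rw [if_neg (fun h => hm ⟨b, h⟩)]

theorem r_derivatives_nonzero (k : ℕ) (hk : 2 ≤ k) :
    ∀ j : ℕ, j ≤ k →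
      iteratedDeriv j (fun x : ℝ => (1 - x ^ 2) ^ (k + 1) * (1 + x)) 0 ≠ 0 := by
  intro j hj
  set p : ℝ[X] := (1 - X ^ 2) ^ (k + 1) * (1 + X) with hp
  have hfun : (fun x : ℝ => (1 - x ^ 2) ^ (k + 1) * (1 + x)) = fun x => p.eval x := by
    funext x; simp [hp]
  rw [hfun, iterDeriv_poly]
  show ((derivative^[j] p).eval 0) ≠ 0
  rw [← coeff_zero_eq_eval_zero, Polynomial.coeff_iterate_derivative]
  simp only [zero_add, Nat.descFactorial_self, nsmul_eq_mul]
  have hcoeff : p.coeff j ≠ 0 := by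
    have hq : p = (1 - X ^ 2 : ℝ[X]) ^ (k + 1) + (1 - X ^ 2 : ℝ[X]) ^ (k + 1) * X := by
      rw [hp]; ring
    rw [hq, coeff_add]
    have hch : ∀ t : ℕ, t ≤ k + 1 → ((k + 1).choose t : ℝ) ≠ 0 := by
      intro t ht
      exact_mod_cast (Nat.choose_pos ht).ne'
    rcases Nat.even_or_odd j with ⟨t, rfl⟩ | ⟨t, rfl⟩
    · rcases Nat.eq_zero_or_pos (t + t) with h0 | hpos
      · rw [h0, Polynomial.coeff_mul_X_zero, coeff_q, add_zero, if_pos ⟨0, rfl⟩]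
        simp only [Nat.zero_div, pow_zero, one_mul, Nat.choose_zero_right]
        norm_num
      · obtain ⟨m, hm⟩ : ∃ m, t + t = m + 1 := ⟨t + t - 1, by omega⟩
        rw [hm, Polynomial.coeff_mul_X, coeff_q, coeff_q]
        rw [if_pos ⟨t, by omega⟩, if_neg (by omega : ¬ 2 ∣ m)]
        have h2 : (m + 1) / 2 = t := by omega
        rw [h2, add_zero]
        exact mul_ne_zero (by positivity) (hch t (by omega))
    · rw [Polynomial.coeff_mul_X, coeff_q, coeff_q]
      rw [if_neg (by omega : ¬ 2 ∣ 2 * t + 1), if_pos ⟨t, by omega⟩]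
      have h2 : 2 * t / 2 = t := by omega
      rw [h2, zero_add]
      exact mul_ne_zero (by positivity) (hch t (by omega))
  exact mul_ne_zero (Nat.cast_ne_zero.mpr (Nat.factorial_ne_zero j)) hcoeff
end
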